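/- arXiv:1602.00447 — 6 statements merged into one kernel-verified Lean document; each statement's English description precedes it below -/
import Mathlib

section
/- For every positive integer t there exists a t-difference-cover of size at most 2⌈√t⌉ + 2; that is, there exists a set D ⊆ {0, 1, ..., t-1} with |D| ≤ 2⌈√t⌉ + 2 such that for every x ∈ {0, 1, ..., t-1} there exist a, b ∈ D with (a - b) mod t = x (equivalently, (a + t - b) mod t = x). -/
/-- For every positive integer `t` there exists a `t`-difference-cover
`D ⊆ {0,…,t-1}` of size at most `2⌈√t⌉ + 2`: every residue `x` modulo `t`
can be written as `(a - b) mod t` for some `a, b ∈ D`. -/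
theorem exists_difference_cover (t : ℕ) (ht : 0 < t) :
    ∃ D : Finset ℕ, D ⊆ Finset.range t ∧
      D.card ≤ 2 * ⌈Real.sqrt t⌉₊ + 2 ∧
      ∀ x < t, ∃ a ∈ D, ∃ b ∈ D, (a + t - b) % t = x := by
  set r := ⌈Real.sqrt t⌉₊ with hr
  have hr1 : 1 ≤ r := by
    rw [hr, Nat.one_le_ceil_iff]
    have : (0:ℝ) < t := by exact_mod_cast ht
    positivity
  have htr : t ≤ r * r := by
    have h1 : Real.sqrt t ≤ r := Nat.le_ceil _
    have h2 : (t:ℝ) ≤ (r:ℝ) * r := by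
      nlinarith [Real.sq_sqrt (by positivity : (0:ℝ) ≤ (t:ℝ)),
        Real.sqrt_nonneg (t:ℝ)]
    exact_mod_cast h2
  by_cases hcase : t ≤ r + 1
  · refine ⟨Finset.range t, subset_rfl, ?_, ?_⟩
    · simpa using by omega
    · intro x hx
      refine ⟨x, Finset.mem_range.mpr hx, 0, Finset.mem_range.mpr ht, ?_⟩
      rw [Nat.sub_zero, Nat.add_mod_right, Nat.mod_eq_of_lt hx]
  · push_neg at hcase
    refine ⟨Finset.range (r+1) ∪ (Finset.range (r+1)).image (fun i => i * r % t),
      ?_, ?_, ?_⟩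
    · intro y hy
      rcases Finset.mem_union.mp hy with h | h
      · exact Finset.mem_range.mpr (lt_trans (Finset.mem_range.mp h) hcase)
      · obtain ⟨i, _, rfl⟩ := Finset.mem_image.mp h
        exact Finset.mem_range.mpr (Nat.mod_lt _ ht)
    · calc _ ≤ (Finset.range (r+1)).card +
            ((Finset.range (r+1)).image (fun i => i * r % t)).card :=
            Finset.card_union_le _ _
        _ ≤ (r+1) + (r+1) := by
            gcongr
            · simp
            · exact le_trans (Finset.card_image_le) (by simp)
        _ ≤ 2 * r + 2 := by omega
    · intro x hx
      have hb : x % r ≤ r := le_of_lt (Nat.mod_lt _ (by omega))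
      have hq : x / r < r := (Nat.div_lt_iff_lt_mul (by omega)).mpr (lt_of_lt_of_le hx htr)
      refine ⟨(x / r + 1) * r % t, ?_, r - x % r, ?_, ?_⟩
      · apply Finset.mem_union_right
        exact Finset.mem_image.mpr ⟨x / r + 1, Finset.mem_range.mpr (by omega), rfl⟩
      · exact Finset.mem_union_left _ (Finset.mem_range.mpr (by omega))
      · have hm : (x / r + 1) * r = x + (r - x % r) := by
          have h1 := Nat.div_add_mod x r
          have hlt : x % r < r := Nat.mod_lt _ (by omega)
          have h2 : (x / r + 1) * r = r * (x / r) + r := by ring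
          omega
        have hbt : r - x % r ≤ t := by omega
        rw [Nat.add_sub_assoc hbt, Nat.mod_add_mod, hm]
        have : x + (r - x % r) + (t - (r - x % r)) = x + t := by omega
        rw [this, Nat.add_mod_right, Nat.mod_eq_of_lt hx]
end

section
/- There exists a constant C > 0 such that for all positive integers t ≤ n there exists a set S ⊆ {1, ..., n} satisfying: (i) |S| ≤ C·n/√t; (ii) S is t-periodic, i.e., for every i ∈ {1, ..., n-t}, i ∈ S if and only if i + t ∈ S; and (iii) for all i, j ∈ {1, ..., n-t} there exists h with 0 ≤ h ≤ t such that i + h ∈ S and j + h ∈ S. -/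
/-!
Reduce modulo `t`: if `D ⊆ ℤ/t` is a difference cover (every residue is `x - y` with
`x, y ∈ D`), then the integers of `{1,…,n}` whose residue lies in `D` form a `t`-periodic set,
and two positions `i, j` are moved into it simultaneously by the shift `h < t` sending `i` to
`x`, where `x - y = i - j`. Such a set has about `|D| · n / t` elements. Finally, for
`k = ⌊√t⌋ + 1` every residue `m < t < k²` is `k·a - b` with `a, b ≤ k`, so
`{0,…,k} ∪ {0, k, 2k, …, k²}` is a difference cover of size `O(√t)`.
-/

open Finset

def IsDifferenceCover {G : Type*} [AddGroup G] (D : Finset G) : Prop :=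
  ∀ d, ∃ x ∈ D, ∃ y ∈ D, x - y = d

theorem Nat.exists_add_eq_mul_of_lt_mul_self {m k : ℕ} (hm : m < k * k) :
    ∃ a ≤ k, ∃ b ≤ k, m + b = k * a := by
  have hq : m / k < k := Nat.div_lt_of_lt_mul hm
  have hr : m % k < k := Nat.mod_lt _ (Nat.pos_of_ne_zero (by rintro rfl; simp at hm))
  refine ⟨m / k + 1, hq, k - m % k, Nat.sub_le _ _, ?_⟩
  have := Nat.div_add_mod m k
  rw [Nat.mul_succ]
  omega

section SqrtDifferenceCover

variable (t k : ℕ)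

def sqrtDifferenceCover : Finset (ZMod t) :=
  (range (k + 1)).image (fun b : ℕ => (b : ZMod t)) ∪
    (range (k + 1)).image (fun a : ℕ => ((k * a : ℕ) : ZMod t))

theorem card_sqrtDifferenceCover_le : #(sqrtDifferenceCover t k) ≤ 2 * (k + 1) :=
  calc #(sqrtDifferenceCover t k)
      ≤ #(range (k + 1)) + #(range (k + 1)) :=
        (card_union_le _ _).trans (add_le_add card_image_le card_image_le)
    _ = 2 * (k + 1) := by rw [card_range, two_mul]

theorem isDifferenceCover_sqrtDifferenceCover [NeZero t] (htk : t ≤ k * k) :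
    IsDifferenceCover (sqrtDifferenceCover t k) := by
  intro d
  obtain ⟨a, ha, b, hb, hab⟩ :=
    Nat.exists_add_eq_mul_of_lt_mul_self (d.val_lt.trans_le htk)
  refine ⟨((k * a : ℕ) : ZMod t),
    mem_union_right _ (mem_image_of_mem _ (by simpa [Nat.lt_succ_iff])),
    b, mem_union_left _ (mem_image_of_mem _ (by simpa [Nat.lt_succ_iff])), ?_⟩
  rw [← hab, Nat.cast_add, ZMod.natCast_zmod_val, add_sub_cancel_right]

end SqrtDifferenceCover

section LiftResidues

variable {t : ℕ}

def liftResidues (n : ℕ) (D : Finset (ZMod t)) : Finset ℕ :=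
  (Icc 1 n).filter (fun i => (i : ZMod t) ∈ D)

theorem liftResidues_subset (n : ℕ) (D : Finset (ZMod t)) : liftResidues n D ⊆ Icc 1 n :=
  filter_subset _ _

theorem card_liftResidues_le (n : ℕ) (D : Finset (ZMod t)) :
    #(liftResidues n D) ≤ #D * (n / t + 1) := by
  have hmaps : ∀ i ∈ liftResidues n D,
      ((i : ZMod t), i / t) ∈ D ×ˢ range (n / t + 1) := by
    intro i hi
    simp only [liftResidues, mem_filter, mem_Icc] at hi
    exact mem_product.2 ⟨hi.2, mem_range.2 (Nat.lt_succ_of_le (Nat.div_le_div_right hi.1.2))⟩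
  have hinj : Set.InjOn (fun i : ℕ => ((i : ZMod t), i / t)) (liftResidues n D) := by
    intro i _ j _ hij
    simp only [Prod.mk.injEq] at hij
    have hmod := congrArg ZMod.val hij.1
    rw [ZMod.val_natCast, ZMod.val_natCast] at hmod
    rw [← Nat.div_add_mod i t, ← Nat.div_add_mod j t, hij.2, hmod]
  simpa using card_le_card_of_injOn _ hmaps hinj

theorem mem_liftResidues_add_iff {n i : ℕ} (D : Finset (ZMod t)) (hi : 1 ≤ i)
    (hin : i ≤ n - t) : i ∈ liftResidues n D ↔ i + t ∈ liftResidues n D := by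
  simp only [liftResidues, mem_filter, mem_Icc, Nat.cast_add, ZMod.natCast_self, add_zero]
  constructor <;> rintro ⟨_, hD⟩ <;> exact ⟨by omega, hD⟩

theorem exists_add_mem_liftResidues [NeZero t] {n i j : ℕ} {D : Finset (ZMod t)}
    (hD : IsDifferenceCover D) (hi : 1 ≤ i) (hin : i ≤ n - t) (hj : 1 ≤ j)
    (hjn : j ≤ n - t) :
    ∃ h < t, i + h ∈ liftResidues n D ∧ j + h ∈ liftResidues n D := by
  obtain ⟨x, hx, y, hy, hxy⟩ := hD (i - j)
  set h := (x - i).val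
  have hcast : (h : ZMod t) = x - i := ZMod.natCast_zmod_val _
  have hlt : h < t := ZMod.val_lt _
  refine ⟨h, hlt, mem_filter.2 ⟨mem_Icc.2 ⟨by omega, by omega⟩, ?_⟩,
    mem_filter.2 ⟨mem_Icc.2 ⟨by omega, by omega⟩, ?_⟩⟩
  · rwa [Nat.cast_add, hcast, add_sub_cancel]
  · convert hy using 1
    rw [Nat.cast_add, hcast]
    linear_combination hxy

end LiftResidues

theorem natSqrt_add_two_le_three_mul_sqrt {t : ℕ} (ht : 0 < t) :
    (Nat.sqrt t + 2 : ℝ) ≤ 3 * Real.sqrt t := by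
  have h1 : (1 : ℝ) ≤ Real.sqrt t := Real.one_le_sqrt.2 (by exact_mod_cast ht)
  linarith [Real.nat_sqrt_le_real_sqrt (a := t)]

theorem natDiv_add_one_le_two_mul_div {n t : ℕ} (ht : 0 < t) (htn : t ≤ n) :
    ((n / t + 1 : ℕ) : ℝ) ≤ 2 * n / t := by
  have htR : (0 : ℝ) < t := by exact_mod_cast ht
  rw [le_div_iff₀ htR]
  have hdiv := Nat.div_mul_le_self n t
  exact_mod_cast (show (n / t + 1) * t ≤ 2 * n by rw [Nat.succ_mul]; omega)

/-- There is a constant `C > 0` such that for all positive integers `t ≤ n` there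
is a `t`-cover `S ⊆ {1,…,n}` of size at most `C·n/√t`: `S` is `t`-periodic and
any two positions `i, j ∈ {1,…,n-t}` can be simultaneously shifted into `S` by
some `h ≤ t`. -/
theorem exists_t_cover :
    ∃ C : ℝ, 0 < C ∧ ∀ n t : ℕ, 0 < t → t ≤ n →
      ∃ S : Finset ℕ, S ⊆ Finset.Icc 1 n ∧
        (S.card : ℝ) ≤ C * n / Real.sqrt t ∧
        (∀ i, 1 ≤ i → i ≤ n - t → (i ∈ S ↔ i + t ∈ S)) ∧
        (∀ i j, 1 ≤ i → i ≤ n - t → 1 ≤ j → j ≤ n - t →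
          ∃ h ≤ t, i + h ∈ S ∧ j + h ∈ S) := by
  refine ⟨12, by norm_num, fun n t ht htn => ?_⟩
  have : NeZero t := ⟨ht.ne'⟩
  set D := sqrtDifferenceCover t (Nat.sqrt t + 1)
  have hD : IsDifferenceCover D :=
    isDifferenceCover_sqrtDifferenceCover _ _ (Nat.lt_succ_sqrt t).le
  refine ⟨liftResidues n D, liftResidues_subset n D, ?_,
    fun i hi hin => mem_liftResidues_add_iff D hi hin, fun i j hi hin hj hjn => ?_⟩
  · have hcard : #(liftResidues n D) ≤ 2 * (Nat.sqrt t + 2) * (n / t + 1) :=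
      (card_liftResidues_le n D).trans (Nat.mul_le_mul_right _ (card_sqrtDifferenceCover_le _ _))
    have hsqrt : 0 < Real.sqrt t := Real.sqrt_pos.2 (by exact_mod_cast ht)
    calc (#(liftResidues n D) : ℝ)
        ≤ 2 * (Nat.sqrt t + 2 : ℝ) * ((n / t + 1 : ℕ) : ℝ) := by exact_mod_cast hcard
      _ ≤ 2 * (3 * Real.sqrt t) * (2 * n / t) := by
          gcongr
          exacts [natSqrt_add_two_le_three_mul_sqrt ht, natDiv_add_one_le_two_mul_div ht htn]
      _ = 12 * n / Real.sqrt t := by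
          field_simp
          rw [Real.sq_sqrt (Nat.cast_nonneg t)]
          ring
  · obtain ⟨h, hlt, hmem⟩ := exists_add_mem_liftResidues hD hi hin hj hjn
    exact ⟨h, hlt.le, hmem⟩
end

section
/- For every positive integer n, α(n,n) ≤ 4 + a(3,n). -/
/-!
The Ackermann function is increasing in each argument (at positive arguments), so unfolding the
recursion once per step gives `A(i, k + 1) ≤ A(i + k, 1)` for `i ≥ 2`. For `j = a(3, n)` we have
`A(3, j) > ⌊log₂ n⌋`, hence `A(j + 2, ⌊n/n⌋) = A(j + 2, 1) ≥ A(3, j) > ⌊log₂ n⌋`, that is,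
`α(n, n) ≤ a(3, n) + 2`.
-/

/-- The Ackermann function: `A 1 j = 2^j`, `A (i+1) 1 = A i 2`,
`A (i+1) (j+1) = A i (A (i+1) j)` for `i, j ≥ 1`. Values at `i = 0` or `j = 0`
are irrelevant (set to `0`). -/
def ackFn : ℕ → ℕ → ℕ
  | 0, _ => 0
  | 1, j => 2 ^ j
  | _ + 2, 0 => 0
  | i + 2, 1 => ackFn (i + 1) 2
  | i + 2, j + 2 => ackFn (i + 1) (ackFn (i + 2) (j + 1))
termination_by i j => (i, j)

/-- Row inverse of the Ackermann function: `a(i,n) = min {j ≥ 1 : A(i,j) > ⌊log₂ n⌋}`. -/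
noncomputable def ackRowInv (i n : ℕ) : ℕ :=
  sInf {j : ℕ | 1 ≤ j ∧ Nat.log 2 n < ackFn i j}

/-- Inverse Ackermann function: `α(m,n) = min {i ≥ 1 : A(i,⌊m/n⌋) > ⌊log₂ n⌋}`. -/
noncomputable def ackAlpha (m n : ℕ) : ℕ :=
  sInf {i : ℕ | 1 ≤ i ∧ Nat.log 2 n < ackFn i (m / n)}

lemma ackFn_one (j : ℕ) : ackFn 1 j = 2 ^ j := by rw [ackFn]

lemma ackFn_add_two_one (i : ℕ) : ackFn (i + 2) 1 = ackFn (i + 1) 2 := by rw [ackFn]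

lemma ackFn_add_two_add_two (i j : ℕ) :
    ackFn (i + 2) (j + 2) = ackFn (i + 1) (ackFn (i + 2) (j + 1)) := by rw [ackFn]

lemma two_pow_le_ackFn {i j : ℕ} (hi : 0 < i) (hj : 0 < j) : 2 ^ j ≤ ackFn i j := by
  obtain ⟨i, rfl⟩ := Nat.exists_eq_add_one.mpr hi
  induction i generalizing j with
  | zero => rw [ackFn_one]
  | succ i ih =>
    obtain ⟨j, rfl⟩ := Nat.exists_eq_add_one.mpr hj
    induction j with
    | zero =>
      calc 2 ^ (0 + 1) ≤ 2 ^ 2 := by norm_num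
        _ ≤ ackFn (i + 1) 2 := ih (by omega) (by omega)
        _ = ackFn (i + 2) 1 := (ackFn_add_two_one i).symm
    | succ j ihj =>
      have hprev : 2 ^ (j + 1) ≤ ackFn (i + 2) (j + 1) := ihj (by omega)
      have hlt : j + 1 < 2 ^ (j + 1) := Nat.lt_two_pow_self
      calc 2 ^ (j + 1 + 1) ≤ 2 ^ ackFn (i + 2) (j + 1) :=
            Nat.pow_le_pow_right (by norm_num) (by omega)
        _ ≤ ackFn (i + 1) (ackFn (i + 2) (j + 1)) := ih (by omega) (by omega)
        _ = ackFn (i + 2) (j + 2) := (ackFn_add_two_add_two i j).symm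

lemma lt_ackFn {i j : ℕ} (hi : 0 < i) (hj : 0 < j) : j < ackFn i j :=
  Nat.lt_two_pow_self.trans_le (two_pow_le_ackFn hi hj)

lemma ackFn_pos {i j : ℕ} (hi : 0 < i) (hj : 0 < j) : 0 < ackFn i j :=
  hj.trans (lt_ackFn hi hj)

lemma ackFn_lt_ackFn_succ_right {i j : ℕ} (hi : 0 < i) (hj : 0 < j) :
    ackFn i j < ackFn i (j + 1) := by
  obtain ⟨i, rfl⟩ := Nat.exists_eq_add_one.mpr hi
  obtain ⟨j, rfl⟩ := Nat.exists_eq_add_one.mpr hj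
  cases i with
  | zero => simp only [zero_add, ackFn_one]; exact Nat.pow_lt_pow_right (by norm_num) (by omega)
  | succ i =>
    rw [ackFn_add_two_add_two]
    exact lt_ackFn (by omega) (ackFn_pos (by omega) hj)

lemma ackFn_le_ackFn_right {i j k : ℕ} (hi : 0 < i) (hj : 0 < j) (hjk : j ≤ k) :
    ackFn i j ≤ ackFn i k := by
  induction k, hjk using Nat.le_induction with
  | base => rfl
  | succ k hjk ih => exact ih.trans (ackFn_lt_ackFn_succ_right hi (hj.trans_le hjk)).le

lemma ackFn_le_ackFn_succ_left {i j : ℕ} (hi : 0 < i) (hj : 0 < j) :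
    ackFn i j ≤ ackFn (i + 1) j := by
  obtain ⟨i, rfl⟩ := Nat.exists_eq_add_one.mpr hi
  obtain ⟨j, rfl⟩ := Nat.exists_eq_add_one.mpr hj
  cases j with
  | zero => rw [ackFn_add_two_one]; exact ackFn_le_ackFn_right hi hj (by omega)
  | succ j =>
    rw [ackFn_add_two_add_two]
    exact ackFn_le_ackFn_right hi (by omega) (lt_ackFn (by omega) (by omega))

lemma ackFn_le_ackFn_left {i i' j : ℕ} (hi : 0 < i) (hj : 0 < j) (hii' : i ≤ i') :
    ackFn i j ≤ ackFn i' j := by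
  induction i', hii' using Nat.le_induction with
  | base => rfl
  | succ i' hii' ih => exact ih.trans (ackFn_le_ackFn_succ_left (hi.trans_le hii') hj)

lemma ackFn_add_two_le_ackFn_one (i k : ℕ) : ackFn (i + 2) (k + 1) ≤ ackFn (i + k + 2) 1 := by
  induction k with
  | zero => rfl
  | succ k ih =>
    have hpos : 0 < ackFn (i + 2) (k + 1) := ackFn_pos (by omega) (by omega)
    calc ackFn (i + 2) (k + 2) = ackFn (i + 1) (ackFn (i + 2) (k + 1)) :=
          ackFn_add_two_add_two i k
      _ ≤ ackFn (i + 1) (ackFn (i + k + 2) 1) := ackFn_le_ackFn_right (by omega) hpos ih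
      _ ≤ ackFn (i + k + 1) (ackFn (i + k + 2) 1) :=
          ackFn_le_ackFn_left (by omega) (hpos.trans_le ih) (by omega)
      _ = ackFn (i + k + 2) 2 := (ackFn_add_two_add_two (i + k) 0).symm
      _ = ackFn (i + (k + 1) + 2) 1 := (ackFn_add_two_one (i + k + 1)).symm

lemma ackRowInv_spec {i : ℕ} (hi : 0 < i) (n : ℕ) :
    1 ≤ ackRowInv i n ∧ Nat.log 2 n < ackFn i (ackRowInv i n) :=
  Nat.sInf_mem (s := {j | 1 ≤ j ∧ Nat.log 2 n < ackFn i j})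
    ⟨Nat.log 2 n + 1, by omega, (lt_ackFn hi (by omega)).trans' (by omega)⟩

lemma ackAlpha_self_le {n : ℕ} (hn : 0 < n) (i : ℕ) :
    ackAlpha n n ≤ ackRowInv (i + 2) n + i + 1 := by
  obtain ⟨hj, hlog⟩ := ackRowInv_spec (i := i + 2) (by omega) n
  obtain ⟨k, hk⟩ := Nat.exists_eq_add_one.mpr hj
  refine Nat.sInf_le ⟨by omega, ?_⟩
  rw [Nat.div_self hn, hk]
  rw [hk] at hlog
  calc Nat.log 2 n < ackFn (i + 2) (k + 1) := hlog
    _ ≤ ackFn (i + k + 2) 1 := ackFn_add_two_le_ackFn_one i k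
    _ = ackFn (k + 1 + i + 1) 1 := by congr 1; omega

/-- For every positive integer `n`, `α(n,n) ≤ 4 + a(3,n)`. -/
theorem ackAlpha_diag_le (n : ℕ) (hn : 1 ≤ n) :
    ackAlpha n n ≤ 4 + ackRowInv 3 n := by
  have h : ackAlpha n n ≤ ackRowInv 3 n + 1 + 1 := ackAlpha_self_le hn 1
  omega
end

section
/- Let w : ℕ → α be a string, let i, j be positions such that LCE(i,j) is defined, and let a, b be natural numbers. If min(LCE(i,j), a) < a, then min(LCE(i,j), a+b) = min(LCE(i,j), a); otherwise (i.e., if LCE(i,j) ≥ a), min(LCE(i,j), a+b) = a + min(LCE(i+a, j+a), b). -/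
/-- The set of common-extension lengths of `w` at positions `i` and `j`. -/
def extSet {α : Type*} (w : ℕ → α) (i j : ℕ) : Set ℕ :=
  {ℓ | ∀ d < ℓ, w (i + d) = w (j + d)}

/-- The longest common extension of `w` at `i` and `j`: the greatest element of
`extSet w i j` (when this set is bounded above). -/
noncomputable def LCE {α : Type*} (w : ℕ → α) (i j : ℕ) : ℕ :=
  sSup (extSet w i j)

lemma extSet_zero_mem {α : Type*} (w : ℕ → α) (i j : ℕ) : 0 ∈ extSet w i j :=
  fun d hd => absurd hd (Nat.not_lt_zero d)

lemma extSet_mono {α : Type*} {w : ℕ → α} {i j m ℓ : ℕ} (h : ℓ ≤ m)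
    (hm : m ∈ extSet w i j) : ℓ ∈ extSet w i j :=
  fun d hd => hm d (lt_of_lt_of_le hd h)

lemma LCE_mem {α : Type*} {w : ℕ → α} {i j : ℕ} (hbdd : BddAbove (extSet w i j)) :
    LCE w i j ∈ extSet w i j :=
  Nat.sSup_mem ⟨0, extSet_zero_mem w i j⟩ hbdd

lemma extSet_add_iff {α : Type*} {w : ℕ → α} {i j a ℓ : ℕ} :
    a + ℓ ∈ extSet w i j ↔ a ∈ extSet w i j ∧ ℓ ∈ extSet w (i + a) (j + a) := by
  constructor
  · intro h
    refine ⟨extSet_mono (Nat.le_add_right a ℓ) h, fun d hd => ?_⟩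
    have := h (a + d) (by omega)
    simpa [Nat.add_assoc] using this
  · rintro ⟨h1, h2⟩ d hd
    rcases lt_or_ge d a with hda | hda
    · exact h1 d hda
    · have := h2 (d - a) (by omega)
      have e1 : i + a + (d - a) = i + d := by omega
      have e2 : j + a + (d - a) = j + d := by omega
      rwa [e1, e2] at this

/-- Correctness of the recursive `ShortLCE` algorithm: if `min(LCE(i,j), a) < a`
then `min(LCE(i,j), a+b) = min(LCE(i,j), a)`; otherwise (`LCE(i,j) ≥ a`),
`min(LCE(i,j), a+b) = a + min(LCE(i+a, j+a), b)`. -/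
theorem shortLCE_split {α : Type*} (w : ℕ → α) (i j : ℕ)
    (hbdd : BddAbove (extSet w i j)) (a b : ℕ) :
    (min (LCE w i j) a < a → min (LCE w i j) (a + b) = min (LCE w i j) a) ∧
    (a ≤ LCE w i j →
      min (LCE w i j) (a + b) = a + min (LCE w (i + a) (j + a)) b) := by
  constructor
  · intro h
    have hL : LCE w i j < a := by omega
    omega
  · intro ha
    set L := LCE w i j with hLdef
    have hLmem : L ∈ extSet w i j := LCE_mem hbdd
    -- boundedness of the shifted set
    obtain ⟨M, hM⟩ := hbdd
    have hbdd' : BddAbove (extSet w (i + a) (j + a)) := by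
      refine ⟨M, fun ℓ hℓ => ?_⟩
      have : a + ℓ ∈ extSet w i j :=
        extSet_add_iff.mpr ⟨extSet_mono ha hLmem, hℓ⟩
      have := hM this
      omega
    set L' := LCE w (i + a) (j + a) with hL'def
    have hL'mem : L' ∈ extSet w (i + a) (j + a) := LCE_mem hbdd'
    have h1 : a + L' ≤ L :=
      le_csSup ⟨M, hM⟩ (extSet_add_iff.mpr ⟨extSet_mono ha hLmem, hL'mem⟩)
    have h2 : L - a ≤ L' := by
      apply le_csSup hbdd'
      have : a + (L - a) ∈ extSet w i j := by
        have e : a + (L - a) = L := by omega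
        rw [e]; exact hLmem
      exact (extSet_add_iff.mp this).2
    have hLa : L = a + L' := by omega
    omega
end

section
/- For every k ≥ 0 and all positive integers i and j, there exists a natural number Δ with 0 ≤ Δ ≤ 4^k such that i + Δ ∈ D_k and j + Δ ∈ D_k; that is, any two positions can be simultaneously shifted by at most 4^k into the set D_k. -/
/-- `Dset k` is the set of positive integers `i` such that none of the `k` least
significant base-4 digits of `i` is zero. -/
def Dset (k : ℕ) : Set ℕ :=
  {i | 0 < i ∧ ∀ d < k, i / 4 ^ d % 4 ≠ 0}

lemma Dset_aux (k : ℕ) : ∀ i j : ℕ, ∃ Δ < 4 ^ k,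
    (∀ d < k, (i + Δ) / 4 ^ d % 4 ≠ 0) ∧ (∀ d < k, (j + Δ) / 4 ^ d % 4 ≠ 0) := by
  induction k with
  | zero =>
    intro i j
    exact ⟨0, by norm_num, fun d hd => absurd hd (by omega), fun d hd => absurd hd (by omega)⟩
  | succ k ih =>
    intro i j
    obtain ⟨δ, hδ4, hiδ, hjδ⟩ : ∃ δ < 4, (i + δ) % 4 ≠ 0 ∧ (j + δ) % 4 ≠ 0 := by
      by_cases h : (j + (5 - i % 4) % 4) % 4 = 0
      · exact ⟨(6 - i % 4) % 4, by omega, by omega, by omega⟩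
      · exact ⟨(5 - i % 4) % 4, by omega, by omega, h⟩
    obtain ⟨Δ', hΔ', h1, h2⟩ := ih ((i + δ) / 4) ((j + δ) / 4)
    have hpow : 4 ^ (k + 1) = 4 * 4 ^ k := by ring
    refine ⟨δ + 4 * Δ', by omega, ?_, ?_⟩
    · intro d hd
      match d with
      | 0 => simp only [pow_zero, Nat.div_one]; omega
      | e + 1 =>
        have key : (i + (δ + 4 * Δ')) / 4 ^ (e + 1) = ((i + δ) / 4 + Δ') / 4 ^ e := by
          rw [pow_succ', ← Nat.div_div_eq_div_mul]
          congr 1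
          omega
        rw [key]; exact h1 e (by omega)
    · intro d hd
      match d with
      | 0 => simp only [pow_zero, Nat.div_one]; omega
      | e + 1 =>
        have key : (j + (δ + 4 * Δ')) / 4 ^ (e + 1) = ((j + δ) / 4 + Δ') / 4 ^ e := by
          rw [pow_succ', ← Nat.div_div_eq_div_mul]
          congr 1
          omega
        rw [key]; exact h2 e (by omega)

/-- Any two positive positions `i, j` can be simultaneously shifted into `D_k`
by some `Δ ≤ 4^k`. -/
theorem Dset_cover (k : ℕ) (i j : ℕ) (hi : 0 < i) (hj : 0 < j) :
    ∃ Δ ≤ 4 ^ k, i + Δ ∈ Dset k ∧ j + Δ ∈ Dset k := by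
  obtain ⟨Δ, hΔ, h1, h2⟩ := Dset_aux k i j
  exact ⟨Δ, hΔ.le, ⟨by omega, h1⟩, ⟨by omega, h2⟩⟩
end

section
/- For every k ≥ 0 and all positive integers i, j ∈ D_k, there exists Δ ∈ {0, 4^k, 2·4^k} such that i + Δ ∈ D_{k+1} and j + Δ ∈ D_{k+1}. -/
lemma pick_c (a b : ℕ) (ha : a < 4) (hb : b < 4) :
    ∃ c, (c = 0 ∨ c = 1 ∨ c = 2) ∧ (a + c) % 4 ≠ 0 ∧ (b + c) % 4 ≠ 0 := by
  interval_cases a <;> interval_cases b <;>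
    first
      | exact ⟨0, by decide⟩
      | exact ⟨1, by decide⟩
      | exact ⟨2, by decide⟩

lemma add_mem_Dset_succ (k : ℕ) (i c : ℕ) (hi : i ∈ Dset k)
    (hc : (i / 4 ^ k % 4 + c) % 4 ≠ 0) : i + c * 4 ^ k ∈ Dset (k + 1) := by
  obtain ⟨hpos, hdig⟩ := hi
  refine ⟨by positivity, ?_⟩
  intro d hd
  have hdk : d ≤ k := by omega
  have hsplit : c * 4 ^ k = c * 4 ^ (k - d) * 4 ^ d := by
    rw [mul_assoc, ← pow_add]
    congr 2
    omega
  have hdiv : (i + c * 4 ^ k) / 4 ^ d = i / 4 ^ d + c * 4 ^ (k - d) := by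
    rw [hsplit, Nat.add_mul_div_right _ _ (by positivity)]
  rw [hdiv]
  rcases lt_or_eq_of_le hdk with h | h
  · have h4 : c * 4 ^ (k - d) % 4 = 0 := by
      have : (4 : ℕ) ∣ c * 4 ^ (k - d) :=
        Dvd.dvd.mul_left (dvd_pow_self 4 (by omega)) c
      omega
    have := hdig d h
    omega
  · subst h
    simp only [Nat.sub_self, pow_zero, mul_one]
    omega

/-- For `i, j ∈ D_k` there is `Δ ∈ {0, 4^k, 2·4^k}` with
`i + Δ ∈ D_{k+1}` and `j + Δ ∈ D_{k+1}`. -/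
theorem Dset_monotone_cover (k : ℕ) (i j : ℕ)
    (hi : i ∈ Dset k) (hj : j ∈ Dset k) :
    ∃ Δ ∈ ({0, 4 ^ k, 2 * 4 ^ k} : Set ℕ),
      i + Δ ∈ Dset (k + 1) ∧ j + Δ ∈ Dset (k + 1) := by
  obtain ⟨c, hc012, hca, hcb⟩ :=
    pick_c (i / 4 ^ k % 4) (j / 4 ^ k % 4) (Nat.mod_lt _ (by norm_num))
      (Nat.mod_lt _ (by norm_num))
  refine ⟨c * 4 ^ k, ?_, add_mem_Dset_succ k i c hi hca,
    add_mem_Dset_succ k j c hj hcb⟩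
  rcases hc012 with h | h | h <;> subst h <;> simp
end
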